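/- For λH-terms U and V, if U →J* V (V is obtained from U by finitely many J-reduction steps), then E(U) = E(V). -/

import Mathlib

/-- λH-terms: untyped λ-terms in de Bruijn notation with a distinguished
constant `H`. -/
inductive LamH : Type
  | var : ℕ → LamH
  | H : LamH
  | lam : LamH → LamH
  | app : LamH → LamH → LamH

namespace LamH

/-- Lift (shift by one) the de Bruijn indices ≥ `d`. -/
def lift : LamH → ℕ → LamH
  | var n, d => if n < d then var n else var (n + 1)
  | H, _ => H
  | lam u, d => lam (lift u (d + 1))
  | app u v, d => app (lift u d) (lift v d)

/-- Capture-avoiding substitution `t[s/k]`. -/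
def subst : LamH → ℕ → LamH → LamH
  | var n, k, s => if n = k then s else if k < n then var (n - 1) else var n
  | H, _, _ => H
  | lam u, k, s => lam (subst u (k + 1) (lift s 0))
  | app u v, k, s => app (subst u k s) (subst v k s)

/-- Head reduction `→t` contracting the head β-redex:
`λx̄.((λx.U) V) V₁ ... Vₖ →t λx̄.(U[V/x]) V₁ ... Vₖ`. -/
inductive Head : LamH → LamH → Prop
  | beta (u v : LamH) : Head (app (lam u) v) (subst u 0 v)
  | appL {u u' : LamH} (v : LamH) : Head u u' → (∀ w, u ≠ lam w) →
      Head (app u v) (app u' v)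
  | abs {u u' : LamH} : Head u u' → Head (lam u) (lam u')

/-- `headH t = true` iff `t` is of the form `H U₁ U₂ ... Uₙ` with `n ≥ 0`. -/
def headH : LamH → Bool
  | H => true
  | app u _ => headH u
  | _ => false

/-- Remove the head occurrence of `H`: `dropH (H U₁ U₂ ... Uₙ) = U₁ U₂ ... Uₙ`
(for `n ≥ 1`). -/
def dropH : LamH → LamH
  | app H v => v
  | app u v => app (dropH u) v
  | t => t

theorem dropH_app_size_lt : ∀ u v : LamH, headH u = true →
    sizeOf (dropH (app u v)) < sizeOf (app u v) := by
  intro u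
  induction u with
  | var n => intro v h; simp [headH] at h
  | H => intro v _; simp [dropH]
  | lam u ih => intro v h; simp [headH] at h
  | app u1 u2 ih1 ih2 =>
    intro v h
    have h1 : headH u1 = true := by simpa [headH] using h
    have : dropH (app (app u1 u2) v) = app (dropH (app u1 u2)) v := by
      cases u1 <;> rfl
    rw [this]
    have := ih1 u2 h1
    simp only [app.sizeOf_spec] at *
    omega

/-- The extraction map `E`: it erases `H` in head position of an application.
`E(x) = x`, `E(H) = H`, `E(λx.U) = λx.E(U)`,
`E(U V) = (E(U) E(V))` if `U` is not of the form `H U₁ ... Uₙ`, and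
`E(H U₁ U₂ ... Uₙ) = E(U₁ U₂ ... Uₙ)`. -/
def E : LamH → LamH
  | var n => var n
  | H => H
  | lam u => lam (E u)
  | app u v =>
    if h : headH u = true then E (dropH (app u v)) else app (E u) (E v)
termination_by t => sizeOf t
decreasing_by
  all_goals first
    | exact dropH_app_size_lt u v (by assumption)
    | (simp; omega)
    | simp

end LamH

namespace LamH

/-- The J-reduction: `λx₁...λxₘ.(H U₁ U₂ U₃ ... Uₙ) →J λx₁...λxₘ.(U₁ (H U₂) U₃ ... Uₙ)`
for `n ≥ 2`, and `λx₁...λxₘ.(H U₁) →J λx₁...λxₘ.U₁`. -/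
inductive Jred : LamH → LamH → Prop
  | one (v : LamH) : Jred (app H v) v
  | two (u v : LamH) : Jred (app (app H u) v) (app u (app H v))
  | appL {u u' : LamH} (v : LamH) : Jred u u' → (∀ w, u ≠ lam w) →
      (∀ w, u ≠ app H w) → Jred (app u v) (app u' v)
  | abs {u u' : LamH} : Jred u u' → Jred (lam u) (lam u')

end LamH

/-!
Both J-rules only erase or move an occurrence of `H`, and `E` erases every head `H`:
`E (H U₁ U₂ … Uₙ) = E (U₁ U₂ … Uₙ)`. A J-step inside `λ` or in function position changes the
spine of the surrounding term, so we compare terms by their `E`-values in every applicative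
context `· A₁ … Aₖ`. This relation contains `H U ~ U`, and it is a congruence for `λ` and for
both sides of an application; the argument side, needed for `H U₁ U₂ → U₁ (H U₂)`, goes by
well-founded recursion on the head, erasing one head `H` at a time.
-/

namespace LamH

def appList (t : LamH) (args : List LamH) : LamH :=
  args.foldl app t

@[simp] lemma appList_cons (t a : LamH) (as : List LamH) :
    appList t (a :: as) = appList (app t a) as := rfl

lemma E_lam (u : LamH) : E (lam u) = lam (E u) := by
  rw [E]

lemma E_app_of_headH {u : LamH} (h : headH u = true) (v : LamH) :
    E (app u v) = E (dropH (app u v)) := by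
  rw [E]; simp [h]

lemma E_app_of_not_headH {u : LamH} (h : headH u = false) (v : LamH) :
    E (app u v) = app (E u) (E v) := by
  rw [E]; simp [h]

lemma dropH_app_of_ne_H {u : LamH} (h : u ≠ H) (v : LamH) :
    dropH (app u v) = app (dropH u) v := by
  cases u <;> first | rfl | exact absurd rfl h

lemma sizeOf_dropH_lt {a : LamH} (ha : headH a = true) (ha' : a ≠ H) :
    sizeOf (dropH a) < sizeOf a := by
  cases a with
  | app u v => exact dropH_app_size_lt u v ha
  | H => exact absurd rfl ha'
  | _ => simp [headH] at ha

lemma E_appList_of_not_headH (args : List LamH) {t : LamH} (ht : headH t = false) :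
    E (appList t args) = appList (E t) (args.map E) := by
  induction args generalizing t with
  | nil => rfl
  | cons a as ih => rw [appList_cons, ih (t := app t a) ht, E_app_of_not_headH ht]; rfl

lemma E_appList_of_headH (args : List LamH) {s : LamH} (hs : headH s = true) :
    E (appList s args) = E (appList (dropH s) args) := by
  induction args generalizing s with
  | nil =>
    cases s with
    | app u v => exact E_app_of_headH (u := u) hs v
    | H => rfl
    | _ => simp [headH] at hs
  | cons a as ih =>
    obtain rfl | hs' := eq_or_ne s H
    · rfl
    · rw [appList_cons, ih (s := app s a) hs, dropH_app_of_ne_H hs']; rfl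

lemma E_appList_H_cons (a : LamH) (as : List LamH) :
    E (appList H (a :: as)) = E (appList a as) :=
  E_appList_of_headH as (s := app H a) rfl

def AppEquiv (u u' : LamH) : Prop :=
  ∀ args, E (appList u args) = E (appList u' args)

namespace AppEquiv

lemma symm {u u' : LamH} (h : AppEquiv u u') : AppEquiv u' u := fun args => (h args).symm

lemma trans {u u' u'' : LamH} (h : AppEquiv u u') (h' : AppEquiv u' u'') : AppEquiv u u'' :=
  fun args => (h args).trans (h' args)

lemma E_eq {u u' : LamH} (h : AppEquiv u u') : E u = E u' := h []

lemma app_H (v : LamH) : AppEquiv (app H v) v := E_appList_H_cons v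

lemma app_left {u u' : LamH} (h : AppEquiv u u') (v : LamH) : AppEquiv (app u v) (app u' v) :=
  fun args => h (v :: args)

lemma lam {u u' : LamH} (h : AppEquiv u u') : AppEquiv (lam u) (lam u') := fun args => by
  rw [E_appList_of_not_headH args rfl, E_appList_of_not_headH args rfl, E_lam, E_lam, h.E_eq]

lemma app_right {b b' : LamH} (hb : AppEquiv b b') (a : LamH) :
    AppEquiv (app a b) (app a b') := by
  by_cases ha : headH a = true
  · obtain rfl | ha' := eq_or_ne a H
    · exact (app_H b).trans (hb.trans (app_H b').symm)
    · have := sizeOf_dropH_lt ha ha'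
      intro args
      rw [← appList_cons, ← appList_cons, E_appList_of_headH _ ha, E_appList_of_headH _ ha]
      exact app_right hb (dropH a) args
  · replace ha : headH a = false := by simpa using ha
    intro args
    rw [E_appList_of_not_headH args (t := app a b) ha,
      E_appList_of_not_headH args (t := app a b') ha,
      E_app_of_not_headH ha, E_app_of_not_headH ha, hb.E_eq]
termination_by sizeOf a

end AppEquiv

lemma Jred.appEquiv {u u' : LamH} (h : Jred u u') : AppEquiv u u' := by
  induction h with
  | one v => exact AppEquiv.app_H v
  | two a b => exact ((AppEquiv.app_H a).app_left b).trans ((AppEquiv.app_H b).symm.app_right a)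
  | appL v _ _ _ ih => exact ih.app_left v
  | abs _ ih => exact ih.lam

end LamH

/-- If `U →J* V`, then `E(U) = E(V)`. -/
theorem E_Jred_star (U V : LamH)
    (h : Relation.ReflTransGen LamH.Jred U V) : LamH.E U = LamH.E V := by
  induction h with
  | refl => rfl
  | tail _ hstep ih => exact ih.trans hstep.appEquiv.E_eq
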